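/- Canonical compaction commutes with evaluation: if M, s ⇓_{(ρT|ρ), F} v, s' in the intermediate semantics, then M, s ⇓_{(ρT|ρ), F*} v, s' in the optimised semantics, where F* is the canonical compact environment of F obtained by removing, from each captured closure environment, the bindings of the closure's own parameters (recursively). -/

import Mathlib

namespace CPC

abbrev Loc := Nat
abbrev Var := String

inductive Val : Type
  | unit | tt | ff
  | nat (n : Nat)
deriving DecidableEq

inductive Tm : Type
  | val (v : Val)
  | var (x : Var)
  | assign (x : Var) (t : Tm)
  | ite (c t e : Tm)
  | seq (a b : Tm)
  | letrec (f : Var) (ps : List Var) (body rest : Tm)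
  | call (f : Var) (args : List Tm)

abbrev Env := Var → Option Loc
abbrev Store := Loc → Option Val

def emptyEnv : Env := fun _ => none
def emptyStore : Store := fun _ => none

/-- Modification (extension) of a partial function. -/
def updFn {α β : Type} [DecidableEq α] (f : α → Option β) (x : α) (y : β) :
    α → Option β :=
  fun t => if t = x then some y else f t

/-- Concatenation of environments: leftmost binding wins. -/
def envCat (ρ₁ ρ₂ : Env) : Env := fun x => (ρ₁ x).orElse (fun _ => ρ₂ x)

def single (x : Var) (l : Loc) : Env := updFn emptyEnv x l

def envIm (ρ : Env) : Set Loc := {l | ∃ x, ρ x = some l}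
def envDom (ρ : Env) : Set Var := {x | ρ x ≠ none}
def storeDom (s : Store) : Set Loc := {l | s l ≠ none}

open Classical in
/-- Cleaning of a store with respect to an environment. -/
noncomputable def clean (ρ : Env) (s : Store) : Store :=
  fun l => if l ∈ envIm ρ then none else s l

open Classical in
/-- Restriction of a store to a set of locations. -/
noncomputable def resStore (s : Store) (D : Set Loc) : Store :=
  fun l => if l ∈ D then s l else none

/-- Store extension: `t` agrees with `s` on `dom s`. -/
def StoreLe (s t : Store) : Prop := ∀ l ∈ storeDom s, t l = s l

/-- Environment binding a list of variables to a list of locations. -/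
def envOf (xs : List Var) (ls : List Loc) : Env := fun y => (xs.zip ls).lookup y

/-- Store updated with a list of locations bound to a list of values. -/
def updStore (s : Store) (ls : List Loc) (vs : List Val) : Store :=
  fun l => ((ls.zip vs).lookup l).orElse (fun _ => s l)

/-- Closures: parameters, body, captured variable environment,
    captured function environment. -/
inductive Clos : Type
  | mk (ps : List Var) (body : Tm) (ρ : Env) (F : List (Var × Clos))

abbrev FEnv := List (Var × Clos)

def lookupF (F : FEnv) (f : Var) : Option Clos := F.lookup f

/-- `LocIn l F`: the location `l` appears in `F`
    (in some environment captured, recursively, in a closure of `F`). -/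
inductive LocIn : Loc → FEnv → Prop
  | env {l : Loc} {F : FEnv} {f ps body ρ F'} :
      (f, Clos.mk ps body ρ F') ∈ F → l ∈ envIm ρ → LocIn l F
  | deep {l : Loc} {F : FEnv} {f ps body ρ F'} :
      (f, Clos.mk ps body ρ F') ∈ F → LocIn l F' → LocIn l F

/-! ### Naive big-step reduction rules (with derivation height) -/

mutual
inductive EvalN : Nat → Env → FEnv → Tm → Store → Val → Store → Prop
  | val {ρ : Env} {F : FEnv} {v s} : EvalN 1 ρ F (.val v) s v s
  | var {ρ : Env} {F : FEnv} {x l s w} :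
      ρ x = some l → s l = some w → EvalN 1 ρ F (.var x) s w s
  | assign {n} {ρ : Env} {F : FEnv} {a s v s' x l} :
      EvalN n ρ F a s v s' → ρ x = some l → l ∈ storeDom s' →
      EvalN (n+1) ρ F (.assign x a) s .unit (updFn s' l v)
  | seq {n m} {ρ : Env} {F : FEnv} {a b s v s' v' s''} :
      EvalN n ρ F a s v s' → EvalN m ρ F b s' v' s'' →
      EvalN (n+m+1) ρ F (.seq a b) s v' s''
  | ifT {n m} {ρ : Env} {F : FEnv} {c b e s s' v s''} :
      EvalN n ρ F c s .tt s' → EvalN m ρ F b s' v s'' →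
      EvalN (n+m+1) ρ F (.ite c b e) s v s''
  | ifF {n m} {ρ : Env} {F : FEnv} {c b e s s' v s''} :
      EvalN n ρ F c s .ff s' → EvalN m ρ F e s' v s'' →
      EvalN (n+m+1) ρ F (.ite c b e) s v s''
  | letrec {n} {ρ : Env} {F : FEnv} {f ps a b s v s'} :
      EvalN n ρ ((f, Clos.mk ps a ρ F) :: F) b s v s' →
      EvalN (n+1) ρ F (.letrec f ps a b) s v s'
  | call {n m} {ρ : Env} {F : FEnv} {f args s₁ vs s₂ xs b} {ρ' : Env} {F' : FEnv}
      {ls : List Loc} {v s'} :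
      lookupF F f = some (Clos.mk xs b ρ' F') →
      EvalNArgs n ρ F args s₁ vs s₂ →
      ls.length = xs.length → vs.length = xs.length → ls.Nodup →
      (∀ l ∈ ls, l ∉ storeDom s₂ ∧ ¬ LocIn l ((f, Clos.mk xs b ρ' F') :: F')) →
      EvalN m (envCat (envOf xs ls) ρ') ((f, Clos.mk xs b ρ' F') :: F')
        b (updStore s₂ ls vs) v s' →
      EvalN (n+m+1) ρ F (.call f args) s₁ v s'

inductive EvalNArgs : Nat → Env → FEnv → List Tm → Store → List Val → Store → Prop
  | nil {ρ : Env} {F : FEnv} {s} : EvalNArgs 0 ρ F [] s [] s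
  | cons {n m} {ρ : Env} {F : FEnv} {a as s v s' vs s''} :
      EvalN n ρ F a s v s' → EvalNArgs m ρ F as s' vs s'' →
      EvalNArgs (n+m) ρ F (a :: as) s (v :: vs) s''
end

/-! ### Intermediate big-step reduction rules (split environments,
      minimal stores, non-compact closures) -/

mutual
inductive EvalI : Nat → Env → Env → FEnv → Tm → Store → Val → Store → Prop
  | val {ρT ρ : Env} {F : FEnv} {v s} :
      EvalI 1 ρT ρ F (.val v) s v (clean ρT s)
  | var {ρT ρ : Env} {F : FEnv} {x l s w} :
      envCat ρT ρ x = some l → s l = some w →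
      EvalI 1 ρT ρ F (.var x) s w (clean ρT s)
  | assign {n} {ρT ρ : Env} {F : FEnv} {a s v s' x l} :
      EvalI n emptyEnv (envCat ρT ρ) F a s v s' →
      envCat ρT ρ x = some l → l ∈ storeDom s' →
      EvalI (n+1) ρT ρ F (.assign x a) s .unit (clean ρT (updFn s' l v))
  | seq {n m} {ρT ρ : Env} {F : FEnv} {a b s v s' v' s''} :
      EvalI n emptyEnv (envCat ρT ρ) F a s v s' → EvalI m ρT ρ F b s' v' s'' →
      EvalI (n+m+1) ρT ρ F (.seq a b) s v' s''
  | ifT {n m} {ρT ρ : Env} {F : FEnv} {c b e s s' v s''} :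
      EvalI n emptyEnv (envCat ρT ρ) F c s .tt s' → EvalI m ρT ρ F b s' v s'' →
      EvalI (n+m+1) ρT ρ F (.ite c b e) s v s''
  | ifF {n m} {ρT ρ : Env} {F : FEnv} {c b e s s' v s''} :
      EvalI n emptyEnv (envCat ρT ρ) F c s .ff s' → EvalI m ρT ρ F e s' v s'' →
      EvalI (n+m+1) ρT ρ F (.ite c b e) s v s''
  | letrec {n} {ρT ρ : Env} {F : FEnv} {f ps a b s v s'} :
      EvalI n ρT ρ ((f, Clos.mk ps a (envCat ρT ρ) F) :: F) b s v s' →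
      EvalI (n+1) ρT ρ F (.letrec f ps a b) s v s'
  | call {n m} {ρT ρ : Env} {F : FEnv} {f args s₁ vs s₂ xs b} {ρ' : Env} {F' : FEnv}
      {ls : List Loc} {v s'} :
      lookupF F f = some (Clos.mk xs b ρ' F') →
      EvalIArgs n (envCat ρT ρ) F args s₁ vs s₂ →
      ls.length = xs.length → vs.length = xs.length → ls.Nodup →
      (∀ l ∈ ls, l ∉ storeDom s₂ ∧ ¬ LocIn l ((f, Clos.mk xs b ρ' F') :: F')) →
      EvalI m (envOf xs ls) ρ' ((f, Clos.mk xs b ρ' F') :: F')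
        b (updStore s₂ ls vs) v s' →
      EvalI (n+m+1) ρT ρ F (.call f args) s₁ v (clean ρT s')

inductive EvalIArgs : Nat → Env → FEnv → List Tm → Store → List Val → Store → Prop
  | nil {ρ : Env} {F : FEnv} {s} : EvalIArgs 0 ρ F [] s [] s
  | cons {n m} {ρ : Env} {F : FEnv} {a as s v s' vs s''} :
      EvalI n emptyEnv ρ F a s v s' → EvalIArgs m ρ F as s' vs s'' →
      EvalIArgs (n+m) ρ F (a :: as) s (v :: vs) s''
end

/-- Restriction of an environment outside a list of variables. -/
def restrictEnv (ρ : Env) (ps : List Var) : Env :=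
  fun x => if x ∈ ps then none else ρ x

/-! ### Optimised big-step reduction rules (minimal stores and compact
      closures): identical to the intermediate rules except that the
      (letrec) rule builds compact closures -/

mutual
inductive EvalO : Nat → Env → Env → FEnv → Tm → Store → Val → Store → Prop
  | val {ρT ρ : Env} {F : FEnv} {v s} :
      EvalO 1 ρT ρ F (.val v) s v (clean ρT s)
  | var {ρT ρ : Env} {F : FEnv} {x l s w} :
      envCat ρT ρ x = some l → s l = some w →
      EvalO 1 ρT ρ F (.var x) s w (clean ρT s)
  | assign {n} {ρT ρ : Env} {F : FEnv} {a s v s' x l} :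
      EvalO n emptyEnv (envCat ρT ρ) F a s v s' →
      envCat ρT ρ x = some l → l ∈ storeDom s' →
      EvalO (n+1) ρT ρ F (.assign x a) s .unit (clean ρT (updFn s' l v))
  | seq {n m} {ρT ρ : Env} {F : FEnv} {a b s v s' v' s''} :
      EvalO n emptyEnv (envCat ρT ρ) F a s v s' → EvalO m ρT ρ F b s' v' s'' →
      EvalO (n+m+1) ρT ρ F (.seq a b) s v' s''
  | ifT {n m} {ρT ρ : Env} {F : FEnv} {c b e s s' v s''} :
      EvalO n emptyEnv (envCat ρT ρ) F c s .tt s' → EvalO m ρT ρ F b s' v s'' →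
      EvalO (n+m+1) ρT ρ F (.ite c b e) s v s''
  | ifF {n m} {ρT ρ : Env} {F : FEnv} {c b e s s' v s''} :
      EvalO n emptyEnv (envCat ρT ρ) F c s .ff s' → EvalO m ρT ρ F e s' v s'' →
      EvalO (n+m+1) ρT ρ F (.ite c b e) s v s''
  | letrec {n} {ρT ρ : Env} {F : FEnv} {f ps a b s v s'} :
      EvalO n ρT ρ ((f, Clos.mk ps a (restrictEnv (envCat ρT ρ) ps) F) :: F) b s v s' →
      EvalO (n+1) ρT ρ F (.letrec f ps a b) s v s'
  | call {n m} {ρT ρ : Env} {F : FEnv} {f args s₁ vs s₂ xs b} {ρ' : Env} {F' : FEnv}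
      {ls : List Loc} {v s'} :
      lookupF F f = some (Clos.mk xs b ρ' F') →
      EvalOArgs n (envCat ρT ρ) F args s₁ vs s₂ →
      ls.length = xs.length → vs.length = xs.length → ls.Nodup →
      (∀ l ∈ ls, l ∉ storeDom s₂ ∧ ¬ LocIn l ((f, Clos.mk xs b ρ' F') :: F')) →
      EvalO m (envOf xs ls) ρ' ((f, Clos.mk xs b ρ' F') :: F')
        b (updStore s₂ ls vs) v s' →
      EvalO (n+m+1) ρT ρ F (.call f args) s₁ v (clean ρT s')

inductive EvalOArgs : Nat → Env → FEnv → List Tm → Store → List Val → Store → Prop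
  | nil {ρ : Env} {F : FEnv} {s} : EvalOArgs 0 ρ F [] s [] s
  | cons {n m} {ρ : Env} {F : FEnv} {a as s v s' vs s''} :
      EvalO n emptyEnv ρ F a s v s' → EvalOArgs m ρ F as s' vs s'' →
      EvalOArgs (n+m) ρ F (a :: as) s (v :: vs) s''
end


mutual
/-- Canonical compaction of a closure: the bindings of the closure's own
parameters are removed from the captured environment, recursively. -/
inductive ClosCompacts : Clos → Clos → Prop
  | mk {ps b ρ F F'} : FEnvCompacts F F' →
      ClosCompacts (.mk ps b ρ F) (.mk ps b (restrictEnv ρ ps) F')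

/-- Canonical compaction of a function environment. -/
inductive FEnvCompacts : FEnv → FEnv → Prop
  | nil : FEnvCompacts [] []
  | cons {f c c' F F'} : ClosCompacts c c' → FEnvCompacts F F' →
      FEnvCompacts ((f, c) :: F) ((f, c') :: F')
end

/-!
Induction on the intermediate derivation, replaying each rule in the optimised semantics over the
compacted function environment. Only two rules look at closures: in (letrec) the compact closure
built by the optimised rule is the canonical compaction of the full one, and in (call) the
compacted callee differs from the original only on its parameters, which the new bindings
`envOf xs ls` shadow. The freshness side condition of (call) transfers because compaction only
forgets locations.
-/

lemma envIm_restrictEnv_subset (ρ : Env) (ps : List Var) :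
    envIm (restrictEnv ρ ps) ⊆ envIm ρ := by
  rintro l ⟨x, hx⟩
  unfold restrictEnv at hx
  split_ifs at hx
  exact ⟨x, hx⟩

lemma envOf_isSome {xs : List Var} {ls : List Loc} {x : Var}
    (hlen : ls.length = xs.length) (hx : x ∈ xs) : (envOf xs ls x).isSome := by
  rw [← List.map_fst_zip hlen.ge] at hx
  obtain ⟨p, hp, rfl⟩ := List.mem_map.1 hx
  exact List.lookup_isSome_iff.2 ⟨p, hp, beq_self_eq_true _⟩

lemma envCat_envOf_restrictEnv {xs : List Var} {ls : List Loc}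
    (hlen : ls.length = xs.length) (ρ : Env) :
    envCat (envOf xs ls) (restrictEnv ρ xs) = envCat (envOf xs ls) ρ := by
  funext x
  by_cases hx : x ∈ xs
  · obtain ⟨l, hl⟩ := Option.isSome_iff_exists.1 (envOf_isSome hlen hx)
    simp [envCat, hl]
  · simp [envCat, restrictEnv, hx]

namespace FEnvCompacts

lemma lookupF_eq_some {F Fc : FEnv} (hc : FEnvCompacts F Fc) {f : Var} {c : Clos}
    (h : lookupF F f = some c) : ∃ c', lookupF Fc f = some c' ∧ ClosCompacts c c' := by
  induction F generalizing Fc with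
  | nil => simp [lookupF] at h
  | cons p F ih =>
    obtain _ | @⟨g, c₀, c₀', _, _, hcc, hF⟩ := hc
    by_cases hfg : f = g
    · subst hfg
      simp only [lookupF, List.lookup, beq_self_eq_true, Option.some.injEq] at h ⊢
      exact ⟨c₀', rfl, h ▸ hcc⟩
    · simp only [lookupF, List.lookup, beq_false_of_ne hfg] at h ⊢
      exact ih hF h

lemma exists_mem_of_mem {F Fc : FEnv} (hc : FEnvCompacts F Fc) {g : Var} {c' : Clos}
    (h : (g, c') ∈ Fc) : ∃ c, (g, c) ∈ F ∧ ClosCompacts c c' := by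
  induction F generalizing Fc with
  | nil => cases hc; simp at h
  | cons p F ih =>
    obtain _ | ⟨hcc, hF⟩ := hc
    rcases List.mem_cons.1 h with h | h
    · cases h
      exact ⟨_, List.mem_cons_self, hcc⟩
    · obtain ⟨c, hmem, hcc'⟩ := ih hF h
      exact ⟨c, List.mem_cons_of_mem _ hmem, hcc'⟩

lemma locIn {F Fc : FEnv} (hc : FEnvCompacts F Fc) {l : Loc} (hL : LocIn l Fc) :
    LocIn l F := by
  induction hL generalizing F with
  | env hmem him =>
    obtain ⟨_, hmemF, ⟨_⟩⟩ := hc.exists_mem_of_mem hmem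
    exact LocIn.env hmemF (envIm_restrictEnv_subset _ _ him)
  | deep hmem _ ih =>
    obtain ⟨_, hmemF, ⟨hF'⟩⟩ := hc.exists_mem_of_mem hmem
    exact LocIn.deep hmemF (ih hF')

end FEnvCompacts

/- Generalised to any `ρ₂` agreeing with `ρ` behind `ρT`, since the body of a compacted callee
runs in `restrictEnv ρ' xs` rather than `ρ'`. -/
mutual

theorem EvalI.toEvalO {n : Nat} {ρT ρ ρ₂ : Env} {F Fc : FEnv} {M : Tm} {s s' : Store}
    {v : Val} (h : EvalI n ρT ρ F M s v s') (hc : FEnvCompacts F Fc)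
    (hρ : envCat ρT ρ = envCat ρT ρ₂) : ∃ m, EvalO m ρT ρ₂ Fc M s v s' := by
  match h with
  | .val => exact ⟨_, .val⟩
  | .var hx hs => exact ⟨_, .var (hρ ▸ hx) hs⟩
  | .assign ha hx hdom =>
    obtain ⟨_, ha⟩ := ha.toEvalO hc (congrArg (envCat emptyEnv) hρ)
    exact ⟨_, .assign ha (hρ ▸ hx) hdom⟩
  | .seq ha hb =>
    obtain ⟨_, ha⟩ := ha.toEvalO hc (congrArg (envCat emptyEnv) hρ)
    obtain ⟨_, hb⟩ := hb.toEvalO hc hρ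
    exact ⟨_, .seq ha hb⟩
  | .ifT hcnd hb =>
    obtain ⟨_, hcnd⟩ := hcnd.toEvalO hc (congrArg (envCat emptyEnv) hρ)
    obtain ⟨_, hb⟩ := hb.toEvalO hc hρ
    exact ⟨_, .ifT hcnd hb⟩
  | .ifF hcnd he =>
    obtain ⟨_, hcnd⟩ := hcnd.toEvalO hc (congrArg (envCat emptyEnv) hρ)
    obtain ⟨_, he⟩ := he.toEvalO hc hρ
    exact ⟨_, .ifF hcnd he⟩
  | .letrec hb =>
    obtain ⟨_, hb⟩ := hb.toEvalO (.cons (.mk hc) hc) hρ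
    exact ⟨_, .letrec (hρ ▸ hb)⟩
  | .call (f := f) (xs := xs) (b := b) (ρ' := ρ') hlk hargs hlen hlen' hnd hfresh hbody =>
    obtain ⟨_, hlk', ⟨hF'⟩⟩ := hc.lookupF_eq_some hlk
    have hcF := FEnvCompacts.cons (f := f) (ClosCompacts.mk (ps := xs) (b := b) (ρ := ρ') hF') hF'
    obtain ⟨_, hargs⟩ := hargs.toEvalOArgs hc
    obtain ⟨_, hbody⟩ := hbody.toEvalO hcF (envCat_envOf_restrictEnv hlen ρ').symm
    have hfresh' := fun l hl => And.imp_right (mt hcF.locIn) (hfresh l hl)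
    exact ⟨_, .call hlk' (hρ ▸ hargs) hlen hlen' hnd hfresh' hbody⟩
termination_by structural h

theorem EvalIArgs.toEvalOArgs {n : Nat} {ρ : Env} {F Fc : FEnv} {as : List Tm}
    {s s' : Store} {vs : List Val} (h : EvalIArgs n ρ F as s vs s')
    (hc : FEnvCompacts F Fc) : ∃ m, EvalOArgs m ρ Fc as s vs s' := by
  match h with
  | .nil => exact ⟨_, .nil⟩
  | .cons ha has =>
    obtain ⟨_, ha⟩ := ha.toEvalO hc rfl
    obtain ⟨_, has⟩ := has.toEvalOArgs hc
    exact ⟨_, .cons ha has⟩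
termination_by structural h

end

/-- canonical compaction commutes with evaluation
(intermediate implies optimised). -/
theorem intermediate_implies_optimised
    {n : Nat} {ρT ρ : Env} {F : FEnv} {M : Tm} {s s' : Store} {v : Val}
    (h : EvalI n ρT ρ F M s v s')
    (Fc : FEnv) (hc : FEnvCompacts F Fc) :
    ∃ m, EvalO m ρT ρ Fc M s v s' :=
  h.toEvalO hc rfl

end CPC
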